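/- arXiv:2501.06621 — 2 statements merged into one kernel-verified Lean document; each statement's English description precedes it below -/
import Mathlib

section
/- Let K and M be invertible n×n complex matrices, let v̂_1,…,v̂_n be right eigenvectors and v̌_1,…,v̌_n left eigenvectors of the pencil (K,M) with common eigenvalues λ_1,…,λ_n and biorthonormalized so that v̌_i* M v̂_j = δ_ij. Fix n_c with 1 ≤ n_c < n, let P_♯ have columns v̂_1,…,v̂_{n_c} and R_♯ have rows v̌_1*,…,v̌_{n_c}*, and assume R_♯ K P_♯ is invertible. Then the two-grid error-propagation operator annihilates every coarse eigenvector: E_TG(P_♯, R_♯) v̂_j = 0 for all j ≤ n_c. -/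
/-! Since `(R K P)⁻¹ (R K P) = 1`, the coarse-grid correction `1 - P (R K P)⁻¹ R K` kills the
range of `P`. An eigenvector of the pencil is an eigenvector of the smoother `1 - M⁻¹ K` (with
eigenvalue `1 - λ`), so smoothing keeps a coarse eigenvector `v̂_j = P e_j` inside the range of
`P`, where the correction then kills it. -/

open Matrix

/-- Two-grid error-propagation operator `E_TG(P,R) = (I − P (RKP)⁻¹ R K)(I − M⁻¹ K)`. -/
noncomputable def ETG {n nc : ℕ} (K M : Matrix (Fin n) (Fin n) ℂ)
    (P : Matrix (Fin n) (Fin nc) ℂ) (R : Matrix (Fin nc) (Fin n) ℂ) :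
    Matrix (Fin n) (Fin n) ℂ :=
  (1 - P * (R * K * P)⁻¹ * R * K) * (1 - M⁻¹ * K)

section CoarseCorrection

variable {m k α : Type*} [Fintype m] [DecidableEq m] [Fintype k] [DecidableEq k] [CommRing α]

theorem one_sub_mul_inv_mul_mul_mul_self {A : Matrix m m α} {P : Matrix m k α}
    {R : Matrix k m α} (h : IsUnit (R * A * P)) :
    (1 - P * (R * A * P)⁻¹ * R * A) * P = 0 := by
  have hinv : (R * A * P)⁻¹ * (R * A * P) = 1 :=
    nonsing_inv_mul _ ((isUnit_iff_isUnit_det _).mp h)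
  calc (1 - P * (R * A * P)⁻¹ * R * A) * P
      = P - P * ((R * A * P)⁻¹ * (R * A * P)) := by
        rw [Matrix.sub_mul, Matrix.one_mul]; simp only [Matrix.mul_assoc]
    _ = 0 := by rw [hinv, Matrix.mul_one, sub_self]

theorem one_sub_inv_mul_mulVec_of_eigen {K M : Matrix m m α} {v : m → α} {μ : α}
    (hM : IsUnit M) (hv : K *ᵥ v = μ • (M *ᵥ v)) :
    (1 - M⁻¹ * K) *ᵥ v = (1 - μ) • v := by
  have hinv : M⁻¹ * M = 1 := nonsing_inv_mul _ ((isUnit_iff_isUnit_det _).mp hM)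
  rw [sub_mulVec, one_mulVec, ← mulVec_mulVec, hv, mulVec_smul, mulVec_mulVec, hinv,
    one_mulVec, sub_smul, one_smul]

end CoarseCorrection

theorem ETG_mulVec_eq_zero_of_eigen {n nc : ℕ} {K M : Matrix (Fin n) (Fin n) ℂ}
    {P : Matrix (Fin n) (Fin nc) ℂ} {R : Matrix (Fin nc) (Fin n) ℂ} {v : Fin n → ℂ} {μ : ℂ}
    (hM : IsUnit M) (hcoarse : IsUnit (R * K * P)) (hv : K *ᵥ v = μ • (M *ᵥ v))
    {c : Fin nc → ℂ} (hPc : P *ᵥ c = v) :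
    ETG K M P R *ᵥ v = 0 := by
  rw [ETG, ← mulVec_mulVec, one_sub_inv_mul_mulVec_of_eigen hM hv, mulVec_smul, ← hPc,
    mulVec_mulVec, one_sub_mul_inv_mul_mul_mul_self hcoarse, zero_mulVec, smul_zero]

theorem two_grid_annihilates_coarse_eigenvectors_general
    {n : ℕ} (K M : Matrix (Fin n) (Fin n) ℂ)
    (hM : IsUnit M)
    (vhat : Fin n → (Fin n → ℂ)) (lam : Fin n → ℂ)
    (hright : ∀ i, K *ᵥ vhat i = lam i • (M *ᵥ vhat i))
    (nc : ℕ) (hncn : nc < n)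
    (Psharp : Matrix (Fin n) (Fin nc) ℂ) (Rsharp : Matrix (Fin nc) (Fin n) ℂ)
    (hP : ∀ i j, Psharp i j = vhat (Fin.castLE hncn.le j) i)
    (hcoarse : IsUnit (Rsharp * K * Psharp)) :
    ∀ j : Fin n, (j : ℕ) < nc → (ETG K M Psharp Rsharp) *ᵥ vhat j = 0 := by
  intro j hj
  have hcol : Psharp *ᵥ Pi.single ⟨j, hj⟩ 1 = vhat j := by
    ext i
    rw [mulVec_single_one, col_apply, hP]
    rfl
  exact ETG_mulVec_eq_zero_of_eigen hM hcoarse (hright j) hcol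

/-- The two-grid error-propagation operator built from the first `n_c` biorthonormalized
left/right eigenvectors of the pencil `(K, M)` annihilates every coarse eigenvector:
`E_TG(P♯, R♯) v̂_j = 0` for all `j ≤ n_c`. -/
theorem two_grid_annihilates_coarse_eigenvectors
    {n : ℕ} (K M : Matrix (Fin n) (Fin n) ℂ)
    (hK : IsUnit K) (hM : IsUnit M)
    (vhat vcheck : Fin n → (Fin n → ℂ)) (lam : Fin n → ℂ)
    (hright : ∀ i, K *ᵥ vhat i = lam i • (M *ᵥ vhat i))
    (hleft : ∀ i, (star (vcheck i)) ᵥ* K = lam i • ((star (vcheck i)) ᵥ* M))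
    (hbio : ∀ i j, star (vcheck i) ⬝ᵥ (M *ᵥ vhat j) = if i = j then 1 else 0)
    (nc : ℕ) (hnc1 : 1 ≤ nc) (hncn : nc < n)
    (Psharp : Matrix (Fin n) (Fin nc) ℂ) (Rsharp : Matrix (Fin nc) (Fin n) ℂ)
    (hP : ∀ i j, Psharp i j = vhat (Fin.castLE hncn.le j) i)
    (hR : ∀ j i, Rsharp j i = star (vcheck (Fin.castLE hncn.le j) i))
    (hcoarse : IsUnit (Rsharp * K * Psharp)) :
    ∀ j : Fin n, (j : ℕ) < nc → (ETG K M Psharp Rsharp) *ᵥ vhat j = 0 :=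
  two_grid_annihilates_coarse_eigenvectors_general K M hM vhat lam hright nc hncn Psharp Rsharp hP
    hcoarse
end

section
/- Let K and M be invertible n×n complex matrices such that M⁻¹K is diagonalizable, let v̂_1,…,v̂_n be right eigenvectors (forming a basis of ℂⁿ) and v̌_1,…,v̌_n left eigenvectors of the pencil (K,M) with common eigenvalues λ_1,…,λ_n and biorthonormalized so that v̌_i* M v̂_j = δ_ij. Fix n_c with 1 ≤ n_c < n, let P_♯ have columns v̂_1,…,v̂_{n_c} and R_♯ have rows v̌_1*,…,v̌_{n_c}*, and assume R_♯ K P_♯ is invertible. Then the spectrum of the two-grid error-propagation operator is exactly the set {0} ∪ {1 − λ_j : n_c < j ≤ n}. -/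
/-!
The right eigenvectors `v̂ⱼ` diagonalize `E_TG`. The smoother `I − M⁻¹K` scales `v̂ⱼ` by
`1 − λⱼ`. The coarse-grid correction `I − P (RKP)⁻¹ RK` is a projection that kills the range of
`P`, hence `v̂ⱼ` for `j < n_c`, and fixes every `v` with `RKv = 0`; for `j ≥ n_c` we have
`RKv̂ⱼ = λⱼ RMv̂ⱼ = 0` by biorthonormality. Biorthonormality also gives the eigenvector matrix the
left inverse `W M` (`W` having rows `v̌ᵢ*`), so `E_TG` is similar to
`diag(0, …, 0, 1 − λ_{n_c}, …, 1 − λ_{n−1})`.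
-/

open Matrix

theorem Set.range_piecewise_const {α β : Type*} (s : Set α) [DecidablePred (· ∈ s)] (f : α → β)
    (b : β) (hs : sᶜ.Nonempty) : Set.range (s.piecewise f fun _ => b) = {b} ∪ f '' s := by
  rw [Set.range_piecewise, hs.image_const, Set.union_comm]

namespace Matrix

variable {ι 𝕜 : Type*} [Fintype ι] [DecidableEq ι] [Field 𝕜]

theorem mul_eq_mul_diagonal_of_mulVec_transpose {A V : Matrix ι ι 𝕜} {d : ι → 𝕜}
    (h : ∀ j, A *ᵥ Vᵀ j = d j • Vᵀ j) : A * V = V * diagonal d := by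
  ext i j
  calc (A * V) i j = (A *ᵥ Vᵀ j) i := rfl
    _ = V i j * d j := by rw [h, Pi.smul_apply, smul_eq_mul, mul_comm, transpose_apply]
    _ = (V * diagonal d) i j := (mul_diagonal ..).symm

theorem spectrum_eq_range_of_mul_eq_mul_diagonal {A V : Matrix ι ι 𝕜} (hV : IsUnit V)
    {d : ι → 𝕜} (h : A * V = V * diagonal d) : spectrum 𝕜 A = Set.range d := by
  obtain ⟨u, rfl⟩ := hV
  rw [← Units.eq_mul_inv_iff_mul_eq] at h
  rw [h, spectrum.units_conjugate, spectrum_diagonal]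

theorem one_sub_inv_mul_mulVec_of_mulVec_eq_smul {K M : Matrix ι ι 𝕜} (hM : IsUnit M)
    {v : ι → 𝕜} {μ : 𝕜} (h : K *ᵥ v = μ • (M *ᵥ v)) : (1 - M⁻¹ * K) *ᵥ v = (1 - μ) • v := by
  rw [sub_mulVec, one_mulVec, ← mulVec_mulVec, h, mulVec_smul, mulVec_mulVec,
    nonsing_inv_mul M ((isUnit_iff_isUnit_det M).mp hM), one_mulVec, sub_smul, one_smul]

end Matrix

section Biorthonormal

variable {ι κ 𝕜 : Type*} [CommRing 𝕜] [StarRing 𝕜] {K M : Matrix ι ι 𝕜}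
  {vhat vcheck : ι → ι → 𝕜} {lam : ι → 𝕜}

theorem isUnit_transpose_of_biorthonormal [Fintype ι] [DecidableEq ι]
    (hbio : ∀ i j, star (vcheck i) ⬝ᵥ (M *ᵥ vhat j) = if i = j then 1 else 0) :
    IsUnit (of vhat)ᵀ := by
  refine (isUnit_iff_isUnit_det _).mpr (isUnit_det_of_left_inverse (B := of (star vcheck) * M) ?_)
  ext i j
  rw [Matrix.mul_assoc]
  exact (hbio i j).trans (one_apply ..).symm

theorem mul_mulVec_eq_zero_of_biorthonormal [Fintype ι] [DecidableEq ι] {R : Matrix κ ι 𝕜} (c : κ → ι)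
    (hR : ∀ k i, R k i = star (vcheck (c k) i))
    (hright : ∀ i, K *ᵥ vhat i = lam i • (M *ᵥ vhat i))
    (hbio : ∀ i j, star (vcheck i) ⬝ᵥ (M *ᵥ vhat j) = if i = j then 1 else 0)
    {j : ι} (hj : ∀ k, c k ≠ j) : (R * K) *ᵥ vhat j = 0 := by
  rw [← mulVec_mulVec, hright, mulVec_smul]
  ext k
  have hRk : (R *ᵥ (M *ᵥ vhat j)) k = star (vcheck (c k)) ⬝ᵥ (M *ᵥ vhat j) := by
    simp only [mulVec, dotProduct, hR]
    rfl
  rw [Pi.smul_apply, hRk, hbio, if_neg (hj k), smul_zero, Pi.zero_apply]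

end Biorthonormal

theorem mulVec_single_one_of_apply_eq {ι κ 𝕜 : Type*} [Fintype κ] [DecidableEq κ] [Semiring 𝕜]
    {P : Matrix ι κ 𝕜} {vhat : ι → ι → 𝕜} (c : κ → ι) (hP : ∀ i k, P i k = vhat (c k) i)
    (k : κ) : P *ᵥ Pi.single k 1 = vhat (c k) := by
  ext i
  simp [hP]

section CoarseCorrection

variable {ι κ 𝕜 : Type*} [Fintype ι] [DecidableEq ι] [Fintype κ] [DecidableEq κ] [Field 𝕜]

noncomputable def coarseCorrection (K : Matrix ι ι 𝕜) (P : Matrix ι κ 𝕜) (R : Matrix κ ι 𝕜) :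
    Matrix ι ι 𝕜 :=
  1 - P * (R * K * P)⁻¹ * R * K

variable {K : Matrix ι ι 𝕜} {P : Matrix ι κ 𝕜} {R : Matrix κ ι 𝕜}

theorem coarseCorrection_mulVec_mulVec (hC : IsUnit (R * K * P)) (e : κ → 𝕜) :
    coarseCorrection K P R *ᵥ (P *ᵥ e) = 0 := by
  rw [coarseCorrection, sub_mulVec, one_mulVec, mulVec_mulVec, Matrix.mul_assoc _ R K,
    Matrix.mul_assoc, Matrix.mul_assoc, nonsing_inv_mul _ ((isUnit_iff_isUnit_det _).mp hC),
    Matrix.mul_one, sub_self]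

theorem coarseCorrection_mulVec_of_mulVec_eq_zero {v : ι → 𝕜} (h : (R * K) *ᵥ v = 0) :
    coarseCorrection K P R *ᵥ v = v := by
  rw [coarseCorrection, sub_mulVec, one_mulVec, Matrix.mul_assoc _ R K, ← mulVec_mulVec, h,
    mulVec_zero, sub_zero]

end CoarseCorrection

theorem ETG_mulVec_of_mulVec_eq_smul {n nc : ℕ} {K M : Matrix (Fin n) (Fin n) ℂ} (hM : IsUnit M)
    (P : Matrix (Fin n) (Fin nc) ℂ) (R : Matrix (Fin nc) (Fin n) ℂ) {v : Fin n → ℂ} {μ : ℂ}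
    (h : K *ᵥ v = μ • (M *ᵥ v)) :
    ETG K M P R *ᵥ v = (1 - μ) • (coarseCorrection K P R *ᵥ v) := by
  rw [ETG, ← mulVec_mulVec, one_sub_inv_mul_mulVec_of_mulVec_eq_smul hM h, mulVec_smul,
    coarseCorrection]

theorem two_grid_spectrum_general
    {n : ℕ} (K M : Matrix (Fin n) (Fin n) ℂ)
    (hM : IsUnit M)
    (vhat vcheck : Fin n → (Fin n → ℂ)) (lam : Fin n → ℂ)
    (hright : ∀ i, K *ᵥ vhat i = lam i • (M *ᵥ vhat i))
    (hbio : ∀ i j, star (vcheck i) ⬝ᵥ (M *ᵥ vhat j) = if i = j then 1 else 0)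
    (nc : ℕ) (hnc1 : 1 ≤ nc) (hncn : nc < n)
    (Psharp : Matrix (Fin n) (Fin nc) ℂ) (Rsharp : Matrix (Fin nc) (Fin n) ℂ)
    (hP : ∀ i j, Psharp i j = vhat (Fin.castLE hncn.le j) i)
    (hR : ∀ j i, Rsharp j i = star (vcheck (Fin.castLE hncn.le j) i))
    (hcoarse : IsUnit (Rsharp * K * Psharp)) :
    spectrum ℂ (ETG K M Psharp Rsharp) =
      {0} ∪ (fun j => 1 - lam j) '' {j : Fin n | nc ≤ (j : ℕ)} := by
  classical
  set fine : Set (Fin n) := {j | nc ≤ (j : ℕ)}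
  have hcol : ∀ j, ETG K M Psharp Rsharp *ᵥ vhat j =
      fine.piecewise (fun j => 1 - lam j) (fun _ => 0) j • vhat j := by
    intro j
    rw [ETG_mulVec_of_mulVec_eq_smul hM _ _ (hright j)]
    by_cases hj : j ∈ fine
    · have hRK := mul_mulVec_eq_zero_of_biorthonormal _ hR hright hbio (j := j)
        fun k hk => by have := k.isLt; simp [fine, ← hk] at hj; omega
      rw [coarseCorrection_mulVec_of_mulVec_eq_zero hRK, Set.piecewise_eq_of_mem _ _ _ hj]
    · have hk : (j : ℕ) < nc := by simpa [fine] using hj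
      have hvj : vhat j = Psharp *ᵥ Pi.single ⟨j, hk⟩ 1 :=
        (mulVec_single_one_of_apply_eq _ hP ⟨j, hk⟩).symm
      rw [Set.piecewise_eq_of_notMem _ _ _ hj, hvj, coarseCorrection_mulVec_mulVec hcoarse,
        smul_zero, zero_smul]
  have hfine : fineᶜ.Nonempty := ⟨⟨0, by omega⟩, by simp [fine]; omega⟩
  rw [spectrum_eq_range_of_mul_eq_mul_diagonal (isUnit_transpose_of_biorthonormal hbio)
    (mul_eq_mul_diagonal_of_mulVec_transpose hcol), Set.range_piecewise_const _ _ _ hfine]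

/-- The spectrum of the two-grid error-propagation operator built from the first `n_c`
biorthonormalized left/right eigenvectors of a diagonalizable pencil `(K, M)` is exactly
`{0} ∪ {1 − λ_j : n_c < j ≤ n}`. -/
theorem two_grid_spectrum
    {n : ℕ} (K M : Matrix (Fin n) (Fin n) ℂ)
    (hK : IsUnit K) (hM : IsUnit M)
    (vhat vcheck : Fin n → (Fin n → ℂ)) (lam : Fin n → ℂ)
    (hright : ∀ i, K *ᵥ vhat i = lam i • (M *ᵥ vhat i))
    (hleft : ∀ i, (star (vcheck i)) ᵥ* K = lam i • ((star (vcheck i)) ᵥ* M))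
    (hbasis : LinearIndependent ℂ vhat)
    (hbio : ∀ i j, star (vcheck i) ⬝ᵥ (M *ᵥ vhat j) = if i = j then 1 else 0)
    (nc : ℕ) (hnc1 : 1 ≤ nc) (hncn : nc < n)
    (Psharp : Matrix (Fin n) (Fin nc) ℂ) (Rsharp : Matrix (Fin nc) (Fin n) ℂ)
    (hP : ∀ i j, Psharp i j = vhat (Fin.castLE hncn.le j) i)
    (hR : ∀ j i, Rsharp j i = star (vcheck (Fin.castLE hncn.le j) i))
    (hcoarse : IsUnit (Rsharp * K * Psharp)) :
    spectrum ℂ (ETG K M Psharp Rsharp) =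
      {0} ∪ (fun j => 1 - lam j) '' {j : Fin n | nc ≤ (j : ℕ)} :=
  two_grid_spectrum_general K M hM vhat vcheck lam hright hbio nc hnc1 hncn Psharp Rsharp hP hR
    hcoarse
end
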